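/- arXiv:1307.2557 — 3 statements merged into one kernel-verified Lean document; each statement's English description precedes it below -/
import Mathlib

section
/- The matrix A^(1) is a normal matrix: A^(1) · (A^(1))^T = (A^(1))^T · A^(1). -/
/-!
Write `C g i = χ_i(g)` for the character table, `D = diag(χ_γ)` and `D' = diag(χ_γ ∘ inv)`.
The defining relations say `D C = C A⁽¹⁾` and `D' C = C A⁽³⁾`, and orthogonality says `Cᴴ C = |G|`,
so `C` is left cancellable and `A = |G|⁻¹ Cᴴ D C`. Hence `A⁽¹⁾` and `A⁽³⁾` commute because the diagonal
matrices `D` and `D'` do, and `A⁽³⁾ = A⁽¹⁾ᵀ` because `conj χ_i(g) = χ_i(g⁻¹)` turns transposing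
`Cᴴ D' C` into reindexing the sum over `G` by `g ↦ g⁻¹`.
-/

namespace Matrix

theorem diagonal_mul_eq_mul_iff {m n R : Type*} [Fintype m] [Fintype n] [DecidableEq m]
    [CommSemiring R] {d : m → R} {C : Matrix m n R} {A : Matrix n n R} :
    diagonal d * C = C * A ↔ ∀ j g, d g * C g j = ∑ i, A i j * C g i := by
  rw [← Matrix.ext_iff, forall_comm]
  refine forall_congr' fun j => forall_congr' fun g => ?_
  rw [diagonal_mul, mul_apply]
  simp only [mul_comm (C _ _)]

variable {K : Type*} [Semiring K] {m n p : Type*} [Fintype m] [Fintype n] [DecidableEq n]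
  {B : Matrix n m K} {C : Matrix m n K}

theorem mul_left_cancel_of_mul_eq_one (hBC : B * C = 1) {M N : Matrix n p K}
    (h : C * M = C * N) : M = N := by
  rw [← Matrix.one_mul M, ← hBC, Matrix.mul_assoc, h, ← Matrix.mul_assoc, hBC, Matrix.one_mul]

theorem eq_mul_mul_of_mul_eq_mul (hBC : B * C = 1) {D : Matrix m m K} {A : Matrix n n K}
    (hA : D * C = C * A) : A = B * D * C := by
  rw [Matrix.mul_assoc, hA, ← Matrix.mul_assoc, hBC, Matrix.one_mul]

theorem commute_of_mul_eq_mul (hBC : B * C = 1) {D₁ D₂ : Matrix m m K} {A₁ A₂ : Matrix n n K}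
    (h₁ : D₁ * C = C * A₁) (h₂ : D₂ * C = C * A₂) (hD : Commute D₁ D₂) : Commute A₁ A₂ := by
  refine mul_left_cancel_of_mul_eq_one hBC ?_
  calc C * (A₁ * A₂) = D₁ * D₂ * C := by
        rw [← Matrix.mul_assoc, ← h₁, Matrix.mul_assoc, ← h₂, Matrix.mul_assoc]
    _ = D₂ * D₁ * C := by rw [hD.eq]
    _ = C * (A₂ * A₁) := by
        rw [Matrix.mul_assoc, h₁, ← Matrix.mul_assoc, h₂, Matrix.mul_assoc]

end Matrix

open Matrix in
theorem transpose_conjTranspose_mul_diagonal_mul {G R n : Type*} [Group G] [Fintype G]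
    [DecidableEq G] [CommSemiring R] [StarRing R] [Fintype n] {C : Matrix G n R}
    (hC : ∀ g i, star (C g i) = C g⁻¹ i) (d : G → R) :
    (Cᴴ * diagonal d * C)ᵀ = Cᴴ * diagonal (fun g => d g⁻¹) * C := by
  ext i j
  rw [transpose_apply, mul_apply, mul_apply]
  refine Fintype.sum_equiv (Equiv.inv G) _ _ fun g => ?_
  simp only [mul_diagonal, conjTranspose_apply, Equiv.inv_apply, inv_inv, ← hC, star_star]
  ring

/-- The multiplicity matrix `A1` (for tensoring the irreducibles with `γ`) is a
normal matrix: `A1 * A1ᵀ = A1ᵀ * A1`.  (Its transpose is the analogous matrix `A3` for the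
dual representation `γ*`, and `A1`, `A3` commute.) -/
theorem A1_normal {G : Type} [Group G] [Fintype G] {l : ℕ}
    (χ : Fin (l + 1) → G → ℂ) (χγ : G → ℂ)
    (horth : ∀ i i', ∑ g : G, (starRingEnd ℂ) (χ i g) * χ i' g =
      if i = i' then (Fintype.card G : ℂ) else 0)
    (hconj : ∀ i g, (starRingEnd ℂ) (χ i g) = χ i g⁻¹)
    (A1 A3 : Matrix (Fin (l + 1)) (Fin (l + 1)) ℕ)
    (hA1 : ∀ j g, χγ g * χ j g = ∑ i, (A1 i j : ℂ) * χ i g)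
    (hA3 : ∀ j g, χγ g⁻¹ * χ j g = ∑ i, (A3 i j : ℂ) * χ i g) :
    A1 * A1.transpose = A1.transpose * A1 := by
  classical
  obtain ⟨C, hC_apply⟩ : ∃ C : Matrix G (Fin (l + 1)) ℂ, ∀ g i, C g i = χ i g :=
    ⟨Matrix.of fun g i => χ i g, fun _ _ => rfl⟩
  have hC_star : ∀ g i, star (C g i) = C g⁻¹ i := fun g i => by
    rw [hC_apply, hC_apply]
    exact hconj i g
  have hcard : (Fintype.card G : ℂ) ≠ 0 := Nat.cast_ne_zero.2 Fintype.card_ne_zero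
  set B := (Fintype.card G : ℂ)⁻¹ • C.conjTranspose
  have hBC : B * C = 1 := by
    ext i i'
    rw [Matrix.smul_mul, Matrix.smul_apply, Matrix.mul_apply]
    simp only [Matrix.conjTranspose_apply, hC_apply, RCLike.star_def, horth, Matrix.one_apply]
    split_ifs <;> simp [hcard]
  have h1 : Matrix.diagonal χγ * C = C * A1.map ((↑) : ℕ → ℂ) :=
    Matrix.diagonal_mul_eq_mul_iff.2 fun j g => by simpa only [hC_apply, Matrix.map_apply] using hA1 j g
  have h3 : Matrix.diagonal (fun g => χγ g⁻¹) * C = C * A3.map ((↑) : ℕ → ℂ) :=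
    Matrix.diagonal_mul_eq_mul_iff.2 fun j g => by simpa only [hC_apply, Matrix.map_apply] using hA3 j g
  have htr : A3.map ((↑) : ℕ → ℂ) = (A1.map ((↑) : ℕ → ℂ)).transpose := by
    rw [Matrix.eq_mul_mul_of_mul_eq_mul hBC h3, Matrix.eq_mul_mul_of_mul_eq_mul hBC h1]
    simp only [B, Matrix.smul_mul, Matrix.transpose_smul,
      transpose_conjTranspose_mul_diagonal_mul hC_star]
  have hcomm := Matrix.commute_of_mul_eq_mul hBC h1 h3 (Matrix.commute_diagonal _ _)
  rw [htr, ← Matrix.transpose_map] at hcomm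
  exact (Commute.of_map (f := (Nat.castRingHom ℂ).mapMatrix)
    (Matrix.map_injective Nat.cast_injective) hcomm).eq
end

section
/- For a finite subgroup Γ of SL_4(ℂ) with natural representation γ of character χ, the diagonal entries of T_Γ⁻¹ A^(1) T_Γ, T_Γ⁻¹ A^(2) T_Γ, T_Γ⁻¹ A^(3) T_Γ are respectively conj(χ(g_j)), (χ(g_j)² − χ(g_j²))/2, and χ(g_j). -/
/-! Column orthogonality inverts the character table `T`: `T⁻¹` has entries
`|C_k| / |Γ| · χ_i(g_k⁻¹)`. Hence if `f · χ_j = ∑ᵢ A i j · χ_i` for a function `f` on `Γ`, then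
the rows of `T⁻¹` are left eigenvectors of `A` and `T⁻¹ A T` is the diagonal matrix of the
values `f(g_j⁻¹)`. It remains to compare `f(g⁻¹)` with `f(g)`: an element `g` of finite order in
`SL₄(ℂ)` is diagonalizable, its eigenvalues `d_i` are roots of unity with product `1`, so
`tr g⁻¹ = ∑ d_i⁻¹ = conj (tr g)`, and each `d_i⁻¹ d_j⁻¹` is the product of the two complementary
eigenvalues, which makes the character of `Λ²γ` invariant under `g ↦ g⁻¹`. -/

open Matrix Finset

theorem inv_eq_pow_sub_one_of_pow_eq_one {M : Type*} [DivisionMonoid M] {x : M} {k : ℕ}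
    (hk : k ≠ 0) (hx : x ^ k = 1) : x⁻¹ = x ^ (k - 1) :=
  inv_eq_of_mul_eq_one_right <| by rwa [← pow_succ', Nat.sub_add_cancel (Nat.pos_of_ne_zero hk)]

theorem Module.End.isSemisimple_of_pow_eq_one {K V : Type*} [Field K] [AddCommGroup V]
    [Module K V] {f : Module.End K V} {k : ℕ} (hk : (k : K) ≠ 0) (hf : f ^ k = 1) :
    f.IsSemisimple :=
  isSemisimple_of_squarefree_aeval_eq_zero
    (Polynomial.separable_X_pow_sub_C 1 hk one_ne_zero).squarefree (by simp [hf])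

theorem Matrix.exists_units_conj_diagonal_of_isSemisimple {K n : Type*} [Field K] [IsAlgClosed K]
    [Fintype n] [DecidableEq n] {A : Matrix n n K} (hA : Module.End.IsSemisimple (toLin' A)) :
    ∃ (P : (Matrix n n K)ˣ) (d : n → K),
      A = P * diagonal d * ((P⁻¹ : (Matrix n n K)ˣ) : Matrix n n K) := by
  classical
  let f : Module.End K (n → K) := toLin' A
  have hint : DirectSum.IsInternal f.eigenspace :=
    DirectSum.isInternal_submodule_of_iSupIndep_of_iSup_eq_top
      f.eigenspaces_iSupIndep hA.iSup_eigenspace_eq_top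
  let bs := fun μ => Module.Free.chooseBasis K (f.eigenspace μ)
  let e := (hint.collectedBasis bs).indexEquiv (Pi.basisFun K n)
  let b := (hint.collectedBasis bs).reindex e
  have hb : ∀ i, A *ᵥ b i = (e.symm i).1 • b i := by
    intro i
    have := hint.collectedBasis_mem bs (e.symm i)
    rw [Module.End.mem_eigenspace_iff, toLin'_apply] at this
    simpa [b] using this
  let P : (Matrix n n K)ˣ := ⟨(Pi.basisFun K n).toMatrix b, b.toMatrix (Pi.basisFun K n),
    Module.Basis.toMatrix_mul_toMatrix_flip _ _, Module.Basis.toMatrix_mul_toMatrix_flip _ _⟩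
  refine ⟨P, fun i => (e.symm i).1, ?_⟩
  rw [Units.eq_mul_inv_iff_mul_eq]
  ext i j
  have hcol := congrFun (hb j) i
  simp only [mulVec, dotProduct, Pi.smul_apply, smul_eq_mul] at hcol
  rw [mul_diagonal, mul_apply]
  simp only [P, Module.Basis.toMatrix_apply, Pi.basisFun_repr]
  rw [hcol, mul_comm]

theorem Matrix.exists_eigenvalues_of_pow_eq_one {K n : Type*} [Field K] [IsAlgClosed K]
    [Fintype n] [DecidableEq n] {A : Matrix n n K} {k : ℕ} (hk : (k : K) ≠ 0) (hA : A ^ k = 1) :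
    ∃ d : n → K, (∀ i, d i ^ k = 1) ∧ A.det = ∏ i, d i ∧
      ∀ m : ℕ, (A ^ m).trace = ∑ i, d i ^ m := by
  have hss : Module.End.IsSemisimple (toLin' A) := by
    refine Module.End.isSemisimple_of_pow_eq_one hk ?_
    show toLinAlgEquiv' A ^ k = 1
    rw [← map_pow, hA, map_one]
  obtain ⟨P, d, rfl⟩ := exists_units_conj_diagonal_of_isSemisimple hss
  refine ⟨d, fun i => ?_, by rw [det_units_conj, det_diagonal], fun m => ?_⟩
  · rw [Units.conj_pow, diagonal_pow, Units.mul_inv_eq_iff_eq_mul, one_mul,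
      P.isUnit.mul_eq_left] at hA
    simpa using congrFun (congrFun hA i) i
  · rw [Units.conj_pow, diagonal_pow, trace_units_conj, trace_diagonal]
    rfl

theorem sq_sum_inv_sub_sum_inv_sq_of_prod_eq_one {K : Type*} [Field K] {d : Fin 4 → K}
    (hd : ∏ i, d i = 1) :
    (∑ i, (d i)⁻¹) ^ 2 - ∑ i, (d i)⁻¹ ^ 2 = (∑ i, d i) ^ 2 - ∑ i, d i ^ 2 := by
  rw [Fin.prod_univ_four] at hd
  simp only [Fin.sum_univ_four]
  rw [inv_eq_of_mul_eq_one_right (b := d 1 * d 2 * d 3) (by linear_combination hd),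
    inv_eq_of_mul_eq_one_right (b := d 0 * d 2 * d 3) (by linear_combination hd),
    inv_eq_of_mul_eq_one_right (b := d 0 * d 1 * d 3) (by linear_combination hd),
    inv_eq_of_mul_eq_one_right (b := d 0 * d 1 * d 2) (by linear_combination hd)]
  linear_combination
    2 * (d 0 * d 1 + d 0 * d 2 + d 0 * d 3 + d 1 * d 2 + d 1 * d 3 + d 2 * d 3) * hd

namespace Matrix.SpecialLinearGroup

variable {n : Type*} [Fintype n] [DecidableEq n]

theorem exists_eigenvalues_of_isOfFinOrder {g : SpecialLinearGroup n ℂ} (hg : IsOfFinOrder g) :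
    ∃ d : n → ℂ, (∀ i, ‖d i‖ = 1) ∧ ∏ i, d i = 1 ∧
      (∀ m : ℕ, trace (↑(g ^ m) : Matrix n n ℂ) = ∑ i, d i ^ m) ∧
      ∀ m : ℕ, trace (↑(g⁻¹ ^ m) : Matrix n n ℂ) = ∑ i, (d i)⁻¹ ^ m := by
  have hk : orderOf g ≠ 0 := hg.orderOf_pos.ne'
  have hgk : (g : Matrix n n ℂ) ^ orderOf g = 1 := by
    rw [← coe_pow, pow_orderOf_eq_one, coe_one]
  obtain ⟨d, hd, hdet, htr⟩ := exists_eigenvalues_of_pow_eq_one (Nat.cast_ne_zero.2 hk) hgk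
  have htr' : ∀ m : ℕ, trace (↑(g ^ m) : Matrix n n ℂ) = ∑ i, d i ^ m := fun m => by
    rw [coe_pow, htr]
  refine ⟨d, fun i => Complex.norm_eq_one_of_pow_eq_one (hd i) hk, by rw [← hdet, det_coe],
    htr', fun m => ?_⟩
  rw [inv_eq_pow_sub_one_of_pow_eq_one hk (pow_orderOf_eq_one g), ← pow_mul, htr']
  simp_rw [inv_eq_pow_sub_one_of_pow_eq_one hk (hd _), ← pow_mul]

theorem trace_inv_eq_conj_trace {g : SpecialLinearGroup n ℂ} (hg : IsOfFinOrder g) :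
    trace (↑g⁻¹ : Matrix n n ℂ) = starRingEnd ℂ (trace (g : Matrix n n ℂ)) := by
  obtain ⟨d, hd, -, htr, htr_inv⟩ := exists_eigenvalues_of_isOfFinOrder hg
  have h1 := htr_inv 1
  have h2 := htr 1
  simp only [pow_one] at h1 h2
  rw [h1, h2, map_sum]
  simp_rw [Complex.inv_eq_conj (hd _)]

theorem sq_trace_inv_sub_trace_inv_sq {g : SpecialLinearGroup (Fin 4) ℂ} (hg : IsOfFinOrder g) :
    trace (↑g⁻¹ : Matrix (Fin 4) (Fin 4) ℂ) ^ 2 -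
        trace (↑(g⁻¹ ^ 2) : Matrix (Fin 4) (Fin 4) ℂ) =
      trace (g : Matrix (Fin 4) (Fin 4) ℂ) ^ 2 -
        trace (↑(g ^ 2) : Matrix (Fin 4) (Fin 4) ℂ) := by
  obtain ⟨d, -, hdet, htr, htr_inv⟩ := exists_eigenvalues_of_isOfFinOrder hg
  have h1 := htr_inv 1
  have h2 := htr 1
  simp only [pow_one] at h1 h2
  rw [h1, h2, htr_inv 2, htr 2, sq_sum_inv_sub_sum_inv_sq_of_prod_eq_one hdet]

end Matrix.SpecialLinearGroup

section CharacterTable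

variable {G ι : Type*} [Group G] [Fintype G] [DecidableRel (IsConj : G → G → Prop)]
  [Fintype ι] {gr : ι → G}

theorem sum_eq_sum_card_isConj_smul {M : Type*} [AddCommMonoid M]
    (hrep : ∀ x : G, ∃! k, IsConj (gr k) x) {F : G → M} (hF : ∀ a b, IsConj a b → F a = F b) :
    ∑ x, F x = ∑ k, #{x | IsConj (gr k) x} • F (gr k) := by
  have hx : ∀ x, ∑ k, (if IsConj (gr k) x then F x else 0) = F x := fun x => by
    obtain ⟨j, hj, huniq⟩ := hrep x
    rw [sum_eq_single j (fun k _ hk => if_neg fun h => hk (huniq k h)) (by simp), if_pos hj]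
  calc ∑ x, F x = ∑ x, ∑ k, (if IsConj (gr k) x then F x else 0) := by simp only [hx]
    _ = ∑ k, ∑ x with IsConj (gr k) x, F x := by rw [sum_comm]; simp only [sum_filter]
    _ = ∑ k, #{x | IsConj (gr k) x} • F (gr k) := by
      refine sum_congr rfl fun k _ => ?_
      rw [← sum_const]
      exact sum_congr rfl fun x hx => (hF _ _ (mem_filter.1 hx).2).symm

def charTable (χ : ι → G → ℂ) (gr : ι → G) : Matrix ι ι ℂ :=
  of fun i j => χ i (gr j)

noncomputable def charTableInv (χ : ι → G → ℂ) (gr : ι → G) : Matrix ι ι ℂ :=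
  of fun k i => (#{x | IsConj (gr k) x} / Fintype.card G : ℂ) * χ i (gr k)⁻¹

variable [DecidableEq ι] {χ : ι → G → ℂ}

theorem charTable_mul_charTableInv (hrep : ∀ x : G, ∃! k, IsConj (gr k) x)
    (horth : ∀ i i', ∑ g, starRingEnd ℂ (χ i g) * χ i' g =
      if i = i' then (Fintype.card G : ℂ) else 0)
    (hconj : ∀ i g, starRingEnd ℂ (χ i g) = χ i g⁻¹)
    (hclass : ∀ i (a b : G), IsConj a b → χ i a = χ i b) :
    charTable χ gr * charTableInv χ gr = 1 := by
  ext i i'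
  have hsum := sum_eq_sum_card_isConj_smul hrep
    (F := fun x => starRingEnd ℂ (χ i' x) * χ i x) fun a b h => by
      rw [hclass i a b h, hclass i' a b h]
  rw [horth i' i, eq_comm] at hsum
  simp only [nsmul_eq_mul, hconj] at hsum
  have hN : (Fintype.card G : ℂ) ≠ 0 := Nat.cast_ne_zero.2 Fintype.card_ne_zero
  calc ∑ j, charTable χ gr i j * charTableInv χ gr j i'
      = (Fintype.card G : ℂ)⁻¹ *
          ∑ k, (#{x | IsConj (gr k) x} : ℂ) * (χ i' (gr k)⁻¹ * χ i (gr k)) := by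
        rw [mul_sum]
        refine sum_congr rfl fun k _ => ?_
        simp only [charTable, charTableInv, of_apply]
        ring
    _ = if i = i' then 1 else 0 := by
        obtain rfl | h := eq_or_ne i i'
        · simp [hsum, hN]
        · simp [hsum, h, h.symm]

theorem charTable_inv_mul_mul_charTable (hrep : ∀ x : G, ∃! k, IsConj (gr k) x)
    (horth : ∀ i i', ∑ g, starRingEnd ℂ (χ i g) * χ i' g =
      if i = i' then (Fintype.card G : ℂ) else 0)
    (hconj : ∀ i g, starRingEnd ℂ (χ i g) = χ i g⁻¹)
    (hclass : ∀ i (a b : G), IsConj a b → χ i a = χ i b)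
    {f : G → ℂ} {A : Matrix ι ι ℕ} (hA : ∀ j g, f g * χ j g = ∑ i, (A i j : ℂ) * χ i g) :
    (charTable χ gr)⁻¹ * A.map (Nat.cast : ℕ → ℂ) * charTable χ gr =
      diagonal fun j => f (gr j)⁻¹ := by
  have hTB := charTable_mul_charTableInv hrep horth hconj hclass
  have hBA : charTableInv χ gr * A.map (Nat.cast : ℕ → ℂ) =
      diagonal (fun j => f (gr j)⁻¹) * charTableInv χ gr := by
    ext j k
    rw [diagonal_mul]
    simp only [mul_apply, charTableInv, of_apply, map_apply]
    calc ∑ i, (#{x | IsConj (gr j) x} / Fintype.card G : ℂ) * χ i (gr j)⁻¹ * A i k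
        = (#{x | IsConj (gr j) x} / Fintype.card G : ℂ) * ∑ i, A i k * χ i (gr j)⁻¹ := by
          rw [mul_sum]
          exact sum_congr rfl fun i _ => by ring
      _ = _ := by rw [← hA]; ring
  rw [inv_eq_right_inv hTB, hBA, Matrix.mul_assoc, mul_eq_one_comm.1 hTB, Matrix.mul_one]

end CharacterTable

/-- For a finite subgroup `Γ ⊂ SL₄ℂ` with natural representation of character
`χγ`, the diagonal entries of `T⁻¹ A1 T`, `T⁻¹ A2 T`, `T⁻¹ A3 T` (where `T` is the character
table) are respectively `conj (χγ (g_j)) = χγ (g_j⁻¹)`, `(χγ(g_j)² − χγ(g_j²))/2`, and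
`χγ (g_j)`. -/
theorem character_table_diagonal_entries {l : ℕ}
    (Γ : Subgroup (Matrix.SpecialLinearGroup (Fin 4) ℂ)) [Fintype Γ]
    (χ : Fin (l + 1) → Γ → ℂ) (χγ χ2 : Γ → ℂ)
    (hχγ : ∀ g : Γ, χγ g = Matrix.trace ((g : Matrix.SpecialLinearGroup (Fin 4) ℂ) :
      Matrix (Fin 4) (Fin 4) ℂ))
    (horth : ∀ i i', ∑ g : Γ, (starRingEnd ℂ) (χ i g) * χ i' g =
      if i = i' then (Fintype.card Γ : ℂ) else 0)
    (hconj : ∀ i g, (starRingEnd ℂ) (χ i g) = χ i g⁻¹)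
    (hclass : ∀ i (a b : Γ), IsConj a b → χ i a = χ i b)
    (hχ2 : ∀ g, χ2 g = ((χγ g) ^ 2 - χγ (g ^ 2)) / 2)
    (gr : Fin (l + 1) → Γ)
    (hrep : ∀ x : Γ, ∃! j, IsConj (gr j) x)
    (A1 A2 A3 : Matrix (Fin (l + 1)) (Fin (l + 1)) ℕ)
    (hA1 : ∀ j g, χγ g * χ j g = ∑ i, (A1 i j : ℂ) * χ i g)
    (hA2 : ∀ j g, χ2 g * χ j g = ∑ i, (A2 i j : ℂ) * χ i g)
    (hA3 : ∀ j g, χγ g⁻¹ * χ j g = ∑ i, (A3 i j : ℂ) * χ i g)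
    (T : Matrix (Fin (l + 1)) (Fin (l + 1)) ℂ)
    (hT : ∀ i j, T i j = χ i (gr j)) :
    ∀ j, (T⁻¹ * A1.map (Nat.cast : ℕ → ℂ) * T) j j = (starRingEnd ℂ) (χγ (gr j)) ∧
      (T⁻¹ * A2.map (Nat.cast : ℕ → ℂ) * T) j j = ((χγ (gr j)) ^ 2 - χγ (gr j ^ 2)) / 2 ∧
      (T⁻¹ * A3.map (Nat.cast : ℕ → ℂ) * T) j j = χγ (gr j) := by
  classical
  obtain rfl : T = charTable χ gr := Matrix.ext hT
  have hdiag {f : Γ → ℂ} {A : Matrix (Fin (l + 1)) (Fin (l + 1)) ℕ}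
      (hA : ∀ j g, f g * χ j g = ∑ i, (A i j : ℂ) * χ i g) (j : Fin (l + 1)) :
      ((charTable χ gr)⁻¹ * A.map (Nat.cast : ℕ → ℂ) * charTable χ gr) j j = f (gr j)⁻¹ := by
    rw [charTable_inv_mul_mul_charTable hrep horth hconj hclass hA, diagonal_apply_eq]
  have hfin (g : Γ) : IsOfFinOrder (g : SpecialLinearGroup (Fin 4) ℂ) :=
    Γ.subtype.isOfFinOrder (isOfFinOrder_of_finite g)
  intro j
  refine ⟨?_, ?_, ?_⟩
  · rw [hdiag hA1, hχγ, hχγ]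
    exact SpecialLinearGroup.trace_inv_eq_conj_trace (hfin _)
  · rw [hdiag hA2, hχ2, hχγ, hχγ, hχγ, hχγ]
    exact congrArg (· / 2) (SpecialLinearGroup.sq_trace_inv_sub_trace_inv_sq (hfin _))
  · rw [hdiag hA3, inv_inv]
end

section
/- The generating series satisfies the boundary relation: (I − wA^(3) + w²A^(2) − w³A^(1) + w⁴I) · P_Γ(t,u,w) = (1 − tw + uw² − t⁻¹uw) Σ_{p,q} v_{p,q,0} t^p u^q + t⁻¹uw Σ_q v_{0,q,0} u^q, as an identity of formal power series in u, w and Laurent series in t. -/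
/-!
Substituting the right-hand sides of the three Clebsch–Gordan recurrences into
`v_r − A³v_{r−1} + A²v_{r−2} − A¹v_{r−3} + v_{r−4}` gives a combination that cancels
identically, for any `v` whatsoever. Hence the left-hand side of the relation is the
alternating sum of the failures `Aⁱ v − (Clebsch–Gordan right-hand side)` of the recurrences
at heights `r − 1, r − 2, r − 3`. These vanish for `r ≥ 0`, and since `v` vanishes below
height `0` the only nonzero failure is at height `−1`, producing the boundary terms.
-/

open Matrix

section ClebschGordan

variable {M : Type*} [AddCommGroup M] (v : ℤ → ℤ → ℤ → M)

-- Clebsch–Gordan: the multiplicity vectors of `π_{p,q,r} ⊗ γ`, `π_{p,q,r} ⊗ Λ²γ`, `π_{p,q,r} ⊗ γ*`.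
def clebschGordan1 (p q r : ℤ) : M :=
  v (p + 1) q r + v p q (r - 1) + v (p - 1) (q + 1) r + v p (q - 1) (r + 1)

def clebschGordan2 (p q r : ℤ) : M :=
  v p (q + 1) r + v p (q - 1) r + v (p + 1) (q - 1) (r + 1) +
    v (p - 1) (q + 1) (r - 1) + v (p - 1) q (r + 1) + v (p + 1) q (r - 1)

def clebschGordan3 (p q r : ℤ) : M :=
  v p q (r + 1) + v (p - 1) q r + v p (q + 1) (r - 1) + v (p + 1) (q - 1) r

theorem clebschGordan_alternating_sum_eq_zero (p q r : ℤ) :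
    v p q r - clebschGordan3 v p q (r - 1) + clebschGordan2 v p q (r - 2) -
      clebschGordan1 v p q (r - 3) + v p q (r - 4) = 0 := by
  have e₁ : r - 2 + 1 = r - 1 := by ring
  have e₂ : r - 3 + 1 = r - 2 := by ring
  have e₃ : r - 1 - 1 = r - 2 := by ring
  have e₄ : r - 2 - 1 = r - 3 := by ring
  have e₅ : r - 3 - 1 = r - 4 := by ring
  simp only [clebschGordan1, clebschGordan2, clebschGordan3, sub_add_cancel,
    e₁, e₂, e₃, e₄, e₅]
  abel

variable {v} (hv : ∀ p q r, r < 0 → v p q r = 0)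
include hv

theorem clebschGordan1_of_lt_neg_one {p q r : ℤ} (hr : r < -1) : clebschGordan1 v p q r = 0 := by
  simp only [clebschGordan1, hv _ _ r (by omega), hv _ _ (r - 1) (by omega),
    hv _ _ (r + 1) (by omega), add_zero]

theorem clebschGordan2_of_lt_neg_one {p q r : ℤ} (hr : r < -1) : clebschGordan2 v p q r = 0 := by
  simp only [clebschGordan2, hv _ _ r (by omega), hv _ _ (r - 1) (by omega),
    hv _ _ (r + 1) (by omega), add_zero]

theorem clebschGordan3_of_lt_neg_one {p q r : ℤ} (hr : r < -1) : clebschGordan3 v p q r = 0 := by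
  simp only [clebschGordan3, hv _ _ r (by omega), hv _ _ (r - 1) (by omega),
    hv _ _ (r + 1) (by omega), add_zero]

theorem clebschGordan1_neg_one (p q : ℤ) : clebschGordan1 v p q (-1) = v p (q - 1) 0 := by
  simp [clebschGordan1, hv _ _ (-1) (by omega), hv _ _ (-2) (by omega)]

theorem clebschGordan2_neg_one (p q : ℤ) :
    clebschGordan2 v p q (-1) = v (p + 1) (q - 1) 0 + v (p - 1) q 0 := by
  simp [clebschGordan2, hv _ _ (-1) (by omega), hv _ _ (-2) (by omega)]

theorem clebschGordan3_neg_one (p q : ℤ) : clebschGordan3 v p q (-1) = v p q 0 := by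
  simp [clebschGordan3, hv _ _ (-1) (by omega), hv _ _ (-2) (by omega)]

end ClebschGordan

section Boundary

variable {n R : Type*} [Fintype n] [Ring R]

theorem mulVec_sub_eq_of_forall_nonneg {A : Matrix n n R} {x F : ℤ → n → R}
    (hx : ∀ s < 0, x s = 0) (hF : ∀ s < -1, F s = 0) (hrec : ∀ s, 0 ≤ s → A *ᵥ x s = F s)
    (s : ℤ) : A *ᵥ x s - F s = -if s = -1 then F (-1) else 0 := by
  rcases le_or_gt 0 s with hs | hs
  · rw [hrec s hs, sub_self, if_neg (by omega), neg_zero]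
  rw [hx s hs, mulVec_zero, zero_sub]
  split_ifs with h
  · rw [h]
  · rw [hF s (by omega)]

theorem alternating_mulVec_eq_boundary {A1 A2 A3 : Matrix n n R} {v : ℤ → ℤ → ℤ → n → R}
    (hv : ∀ p q r, r < 0 → v p q r = 0) {p q : ℤ}
    (hrec1 : ∀ r, 0 ≤ r → A1 *ᵥ v p q r = clebschGordan1 v p q r)
    (hrec2 : ∀ r, 0 ≤ r → A2 *ᵥ v p q r = clebschGordan2 v p q r)
    (hrec3 : ∀ r, 0 ≤ r → A3 *ᵥ v p q r = clebschGordan3 v p q r) (r : ℤ) :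
    v p q r - A3 *ᵥ v p q (r - 1) + A2 *ᵥ v p q (r - 2) - A1 *ᵥ v p q (r - 3) +
        v p q (r - 4) =
      (if r = 0 then v p q 0 else 0) -
        (if r = 1 then v (p + 1) (q - 1) 0 + v (p - 1) q 0 else 0) +
        (if r = 2 then v p (q - 1) 0 else 0) := by
  have d₁ := mulVec_sub_eq_of_forall_nonneg (hv p q)
    (fun _ => clebschGordan1_of_lt_neg_one hv) hrec1 (r - 3)
  have d₂ := mulVec_sub_eq_of_forall_nonneg (hv p q)
    (fun _ => clebschGordan2_of_lt_neg_one hv) hrec2 (r - 2)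
  have d₃ := mulVec_sub_eq_of_forall_nonneg (hv p q)
    (fun _ => clebschGordan3_of_lt_neg_one hv) hrec3 (r - 1)
  have e₁ : r - 1 = -1 ↔ r = 0 := by omega
  have e₂ : r - 2 = -1 ↔ r = 1 := by omega
  have e₃ : r - 3 = -1 ↔ r = 2 := by omega
  simp only [clebschGordan1_neg_one hv, e₃] at d₁
  simp only [clebschGordan2_neg_one hv, e₂] at d₂
  simp only [clebschGordan3_neg_one hv, e₁] at d₃
  calc _ = (v p q r - clebschGordan3 v p q (r - 1) + clebschGordan2 v p q (r - 2) -
          clebschGordan1 v p q (r - 3) + v p q (r - 4)) -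
        (A3 *ᵥ v p q (r - 1) - clebschGordan3 v p q (r - 1)) +
        (A2 *ᵥ v p q (r - 2) - clebschGordan2 v p q (r - 2)) -
        (A1 *ᵥ v p q (r - 3) - clebschGordan1 v p q (r - 3)) := by abel
    _ = _ := by rw [clebschGordan_alternating_sum_eq_zero, d₁, d₂, d₃]; abel

end Boundary

/-- The generating series `P_Γ(t,u,w) = Σ v_{p,q,r} t^p u^q w^r` satisfies
`(I − wA3 + w²A2 − w³A1 + w⁴I)·P_Γ = (1 − tw + uw² − t⁻¹uw) Σ_{p,q} v_{p,q,0} t^p u^q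
+ t⁻¹uw Σ_q v_{0,q,0} u^q`, as an identity of formal power series in `u, w` and Laurent
series in `t`.  The identity is stated coefficientwise (which is what equality of formal
(Laurent) series means): for every `(p,q,r) ∈ ℤ³` the coefficient of `t^p u^q w^r` on
both sides agree, `v` being zero on negative indices. -/
theorem key_relation_boundary {l : ℕ}
    (A1 A2 A3 : Matrix (Fin (l + 1)) (Fin (l + 1)) ℂ)
    (v : ℤ → ℤ → ℤ → (Fin (l + 1) → ℂ))
    (hneg : ∀ p q r, (p < 0 ∨ q < 0 ∨ r < 0) → v p q r = 0)
    (hrec1 : ∀ (p q r : ℤ), 0 ≤ p → 0 ≤ q → 0 ≤ r →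
      A1 *ᵥ v p q r = v (p + 1) q r + v p q (r - 1) + v (p - 1) (q + 1) r +
        v p (q - 1) (r + 1))
    (hrec2 : ∀ (p q r : ℤ), 0 ≤ p → 0 ≤ q → 0 ≤ r →
      A2 *ᵥ v p q r = v p (q + 1) r + v p (q - 1) r + v (p + 1) (q - 1) (r + 1) +
        v (p - 1) (q + 1) (r - 1) + v (p - 1) q (r + 1) + v (p + 1) q (r - 1))
    (hrec3 : ∀ (p q r : ℤ), 0 ≤ p → 0 ≤ q → 0 ≤ r →
      A3 *ᵥ v p q r = v p q (r + 1) + v (p - 1) q r + v p (q + 1) (r - 1) +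
        v (p + 1) (q - 1) r) :
    ∀ (p q r : ℤ),
      v p q r - A3 *ᵥ v p q (r - 1) + A2 *ᵥ v p q (r - 2) - A1 *ᵥ v p q (r - 3) +
          v p q (r - 4) =
        (if r = 0 then v p q 0 else 0) +
        (if r = 1 then -(v (p - 1) q 0) - v (p + 1) (q - 1) 0 +
          (if p = -1 then v 0 (q - 1) 0 else 0) else 0) +
        (if r = 2 then v p (q - 1) 0 else 0) := by
  intro p q r
  by_cases hpq : 0 ≤ p ∧ 0 ≤ q
  · obtain ⟨hp, hq⟩ := hpq
    rw [alternating_mulVec_eq_boundary (fun p q r hr => hneg p q r (Or.inr (Or.inr hr)))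
      (fun r => hrec1 p q r hp hq) (fun r => hrec2 p q r hp hq) (fun r => hrec3 p q r hp hq),
      if_neg (by omega : p ≠ -1)]
    split_ifs <;> abel
  · have hvanish : ∀ s, v p q s = 0 := fun s => hneg p q s (by omega)
    -- at `p = -1` the term `v (p + 1) (q - 1) 0` lies on the boundary `p = 0`
    have hboundary : v (p + 1) (q - 1) 0 = if p = -1 then v 0 (q - 1) 0 else 0 := by
      split_ifs with hp
      · rw [hp, neg_add_cancel]
      · exact hneg _ _ _ (by omega)
    simp [hvanish, hneg (p - 1) q 0 (by omega), hneg p (q - 1) 0 (by omega), hboundary]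
end
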